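/- Given bipartite Euler system data over R satisfying hypotheses (DU), (LS) and (KER), let (κ_n)_{n ∈ N^odd}, (λ_n)_{n ∈ N^even} be a bipartite Euler system of odd type. If λ_n ≠ 0 for some n ∈ N^even, then 𝔪^{k−1}·M_n = 0. If κ_n ≠ 0 for some n ∈ N^odd, then 𝔪^{k−1}·M_n = 0. -/

import Mathlib

/-!
Write `𝔪 = (π)`. The powers `𝔪 ^ j` strictly decrease until they vanish (Nakayama), so a ring of
length `k` has `π ^ k = 0`; hence every nonzero `a ∈ R` is a unit times `π ^ i` with `i < k`. Two
consequences: `R` is a chain ring, and an element `v` with `π ^ (k - 1) • v ≠ 0` has zero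
annihilator. So if `𝔪 ^ (k - 1) M_n ≠ 0`, then `R` embeds in `M_n`.

If `R` embeds in `Sel(p)` with `p` even, (LS) gives `ℓ` such that `loc^unr_ℓ` is injective on that
copy of `R`. Its image then has length `k`, so (DU) forces `loc^ord_ℓ = 0`, and the first
reciprocity law reads `R/(λ_p) ≅ H_ord(ℓ) ≅ R`, i.e. `λ_p = 0`. This is the even case.

For odd `n`, `R²` embeds in `R ⊕ M_n ⊆ Sel(n)`. Take `ℓ` from (LS) for `κ_n`. Over a chain ring,
the kernel of any map `R² → R` contains a copy of `R`, so by (KER) `R` embeds in `Sel(n ∪ {ℓ})`,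
and hence `λ_{n ∪ {ℓ}} = 0`. The second reciprocity law then gives `loc^unr_ℓ(κ_n) = 0`, so
`κ_n = 0`.
-/

/-- The length of a module: the Krull dimension of its lattice of submodules. -/
noncomputable def moduleLength (R M : Type*) [Ring R] [AddCommGroup M] [Module R M] : ℕ∞ :=
  WithBot.unbotD 0 (Order.krullDim (Submodule R M))

open IsLocalRing

theorem moduleLength_eq_length (R M : Type*) [Ring R] [AddCommGroup M] [Module R M] :
    moduleLength R M = Module.length R M := by
  rw [moduleLength, ← Module.coe_length, WithBot.unbotD_coe]

section LocalRing

variable {R : Type*} [CommRing R] [IsLocalRing R]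

theorem IsLocalRing.maximalIdeal_pow_succ_lt (hfg : (maximalIdeal R).FG) {j : ℕ}
    (hj : maximalIdeal R ^ j ≠ ⊥) : maximalIdeal R ^ (j + 1) < maximalIdeal R ^ j := by
  refine lt_of_le_of_ne (Ideal.pow_le_pow_right j.le_succ) fun heq => hj ?_
  refine Submodule.eq_bot_of_le_smul_of_le_jacobson_bot _ _ (Ideal.FG.pow hfg)
    (by rw [smul_eq_mul, ← pow_succ', heq]) (jacobson_eq_maximalIdeal ⊥ bot_ne_top).ge

theorem IsLocalRing.natCast_le_coheight_maximalIdeal_pow (hfg : (maximalIdeal R).FG) (j : ℕ)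
    (hj : maximalIdeal R ^ j ≠ ⊥) : (j : ℕ∞) ≤ Order.coheight (maximalIdeal R ^ j) := by
  induction j with
  | zero => simp
  | succ j ih =>
    have hj' : maximalIdeal R ^ j ≠ ⊥ := ne_bot_of_le_ne_bot hj (Ideal.pow_le_pow_right j.le_succ)
    calc ((j + 1 : ℕ) : ℕ∞) ≤ Order.coheight (maximalIdeal R ^ j) + 1 := by
          push_cast; gcongr; exact ih hj'
      _ ≤ _ := Order.coheight_add_one_le (maximalIdeal_pow_succ_lt hfg hj')

theorem IsLocalRing.maximalIdeal_pow_length_eq_bot (hfg : (maximalIdeal R).FG) {k : ℕ}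
    (hk : Module.length R R = k) : maximalIdeal R ^ k = ⊥ := by
  by_contra hne
  have hlt := Order.coheight_add_one_le (bot_lt_iff_ne_bot.2 hne)
  rw [← Module.length_eq_coheight, hk] at hlt
  have := (add_le_add_left (natCast_le_coheight_maximalIdeal_pow hfg k hne) 1).trans hlt
  norm_cast at this
  omega

end LocalRing

section Uniformizer

variable {R : Type*} [CommRing R] [IsLocalRing R] {π : R}

theorem exists_associated_pow_of_ne_zero (hπ : maximalIdeal R = Ideal.span {π}) {k : ℕ}
    (hπk : π ^ k = 0) {a : R} (ha : a ≠ 0) : ∃ i < k, Associated (π ^ i) a := by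
  classical
  have hdvd : ∀ j, π ^ j ∣ a → j < k := fun j hj => by
    by_contra! hkj
    exact ha (zero_dvd_iff.1 (pow_eq_zero_of_le hkj hπk ▸ hj))
  set i := Nat.findGreatest (fun j => π ^ j ∣ a) k
  obtain ⟨c, hc⟩ : π ^ i ∣ a :=
    Nat.findGreatest_spec (P := fun j => π ^ j ∣ a) (Nat.zero_le _) (by simp)
  have hi := hdvd i ⟨c, hc⟩
  have hcu : IsUnit c := by
    by_contra hnu
    obtain ⟨d, rfl⟩ : π ∣ c := by
      rwa [← Ideal.mem_span_singleton, ← hπ, mem_maximalIdeal, mem_nonunits_iff]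
    exact Nat.findGreatest_is_greatest (Nat.lt_succ_self i) hi
      (show π ^ (i + 1) ∣ a from ⟨d, by rw [hc]; ring⟩)
  exact ⟨i, hi, hcu.unit, hc.symm⟩

theorem pow_eq_zero_of_length_eq (hπ : maximalIdeal R = Ideal.span {π}) {k : ℕ}
    (hk : Module.length R R = k) : π ^ k = 0 := by
  have hπk := Ideal.pow_mem_pow (hπ ▸ Ideal.mem_span_singleton_self π) k
  rwa [maximalIdeal_pow_length_eq_bot (hπ ▸ Submodule.fg_span_singleton π) hk,
    Ideal.mem_bot] at hπk

theorem dvd_pow_pred_of_ne_zero (hπ : maximalIdeal R = Ideal.span {π}) {k : ℕ}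
    (hπk : π ^ k = 0) {a : R} (ha : a ≠ 0) : a ∣ π ^ (k - 1) := by
  obtain ⟨i, hik, hi⟩ := exists_associated_pow_of_ne_zero hπ hπk ha
  exact hi.symm.dvd.trans (pow_dvd_pow π (by omega))

theorem preValuationRing_of_maximalIdeal_eq_span (hπ : maximalIdeal R = Ideal.span {π})
    {k : ℕ} (hπk : π ^ k = 0) : PreValuationRing R := by
  refine PreValuationRing.iff_dvd_total.2 ⟨fun a b => ?_⟩
  rcases eq_or_ne a 0 with rfl | ha
  · exact Or.inr (dvd_zero b)
  rcases eq_or_ne b 0 with rfl | hb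
  · exact Or.inl (dvd_zero a)
  obtain ⟨i, -, hi⟩ := exists_associated_pow_of_ne_zero hπ hπk ha
  obtain ⟨j, -, hj⟩ := exists_associated_pow_of_ne_zero hπ hπk hb
  rw [← hi.dvd_iff_dvd_left, ← hi.dvd_iff_dvd_right, ← hj.dvd_iff_dvd_left,
    ← hj.dvd_iff_dvd_right]
  exact (le_total i j).imp (pow_dvd_pow π) (pow_dvd_pow π)

theorem exists_injective_of_maximalIdeal_pow_smul_ne_bot (hπ : maximalIdeal R = Ideal.span {π})
    {k : ℕ} (hπk : π ^ k = 0) {V : Type*} [AddCommGroup V] [Module R V]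
    (h : maximalIdeal R ^ (k - 1) • (⊤ : Submodule R V) ≠ ⊥) :
    ∃ f : R →ₗ[R] V, Function.Injective f := by
  obtain ⟨v, hv⟩ : ∃ v : V, π ^ (k - 1) • v ≠ 0 := by
    contrapose! h
    rw [eq_bot_iff, Submodule.smul_le]
    intro r hr v _
    obtain ⟨c, rfl⟩ := Ideal.mem_span_singleton'.1 (by rwa [hπ, Ideal.span_singleton_pow] at hr)
    rw [mul_smul, h, smul_zero]
    exact Submodule.zero_mem _
  refine ⟨LinearMap.toSpanSingleton R V v, (injective_iff_map_eq_zero _).2 fun a ha => ?_⟩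
  by_contra ha0
  obtain ⟨c, hc⟩ := dvd_pow_pred_of_ne_zero hπ hπk ha0
  rw [LinearMap.toSpanSingleton_apply] at ha
  exact hv (by rw [hc, mul_comm, mul_smul, ha, smul_zero])

end Uniformizer

theorem exists_injective_prod_comp_eq_zero {R : Type*} [CommRing R] [PreValuationRing R]
    (g : R × R →ₗ[R] R) : ∃ f : R →ₗ[R] R × R, Function.Injective f ∧ g ∘ₗ f = 0 := by
  rcases ValuationRing.dvd_total (g (1, 0)) (g (0, 1)) with ⟨c, hc⟩ | ⟨c, hc⟩
  · refine ⟨LinearMap.toSpanSingleton R _ (c, -1), fun a b hab => ?_, LinearMap.ext_ring ?_⟩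
    · simpa using congrArg Prod.snd hab
    · have : ((c, -1) : R × R) = c • (1, 0) - (0, 1) := by ext <;> simp
      rw [LinearMap.comp_apply, LinearMap.toSpanSingleton_apply, one_smul, this, map_sub,
        map_smul, hc, smul_eq_mul, mul_comm, sub_self, LinearMap.zero_apply]
  · refine ⟨LinearMap.toSpanSingleton R _ (-1, c), fun a b hab => ?_, LinearMap.ext_ring ?_⟩
    · simpa using congrArg Prod.fst hab
    · have : ((-1, c) : R × R) = c • (0, 1) - (1, 0) := by ext <;> simp
      rw [LinearMap.comp_apply, LinearMap.toSpanSingleton_apply, one_smul, this, map_sub,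
        map_smul, hc, smul_eq_mul, mul_comm, sub_self, LinearMap.zero_apply]

section Modules

variable {R : Type*} [CommRing R] {S T H H' : Type*}
  [AddCommGroup S] [Module R S] [AddCommGroup T] [Module R T]
  [AddCommGroup H] [Module R H] [AddCommGroup H'] [Module R H']

theorem eq_zero_iff_of_quotient_equiv (eH : H ≃ₗ[R] R) {r : R} {w : H}
    (e : (R ⧸ Ideal.span {r}) ≃ₗ[R] (H ⧸ R ∙ w)) : r = 0 ↔ w = 0 := by
  have hw : (R ∙ w).map (eH : H →ₗ[R] R) = Ideal.span {eH w} := by simp [Submodule.map_span]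
  have hann := e.annihilator_eq.trans (Submodule.Quotient.equiv _ _ eH hw).annihilator_eq
  rw [Ideal.annihilator_quotient, Ideal.annihilator_quotient] at hann
  rw [← Ideal.span_singleton_eq_bot, hann, Ideal.span_singleton_eq_bot, 
    eH.map_eq_zero_iff]

theorem LinearMap.injective_comp_of_injOn_span {f : R →ₗ[R] S} (hf : Function.Injective f)
    {u : S →ₗ[R] H} (hu : ∀ x ∈ R ∙ f 1, u x = 0 → x = 0) : Function.Injective (u ∘ₗ f) := by
  refine (injective_iff_map_eq_zero _).2 fun a ha => (map_eq_zero_iff f hf).1 ?_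
  have hfa : f a = a • f 1 := by rw [← map_smul, smul_eq_mul, mul_one]
  exact hu _ (hfa ▸ Submodule.smul_mem _ a (Submodule.mem_span_singleton_self _)) ha

theorem LinearMap.eq_zero_of_length_range_add_eq {k : ℕ} (hk : Module.length R R = k)
    {u : S →ₗ[R] H} {o : T →ₗ[R] H'}
    (hsum : Module.length R (range u) + Module.length R (range o) = k)
    {f : R →ₗ[R] S} (hf : Function.Injective (u ∘ₗ f)) : o = 0 := by
  have hu : (k : ℕ∞) ≤ Module.length R (range u) := hk ▸ Module.length_le_of_injective
    ((u ∘ₗ f).codRestrict (range u) fun a => ⟨f a, rfl⟩) ((injective_codRestrict_iff _).2 hf)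
  have ho : Module.length R (range o) = 0 := by
    have hlen : (k : ℕ∞) + Module.length R (range o) ≤ k := (add_le_add_left hu _).trans hsum.le
    lift Module.length R (range o) to ℕ using
      ne_top_of_le_ne_top (ENat.natCast_ne_top k) (hsum ▸ le_add_self) with b
    norm_cast at hlen ⊢
    omega
  rwa [Module.length_eq_zero_iff, Submodule.subsingleton_iff_eq_bot, range_eq_bot] at ho

theorem LinearMap.exists_injective_ker_of_injective_prod [PreValuationRing R] (eH : H ≃ₗ[R] R)
    (u : S →ₗ[R] H) {ι : R × R →ₗ[R] S} (hι : Function.Injective ι) :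
    ∃ f : R →ₗ[R] ker u, Function.Injective f := by
  obtain ⟨g, hg, hgu⟩ := exists_injective_prod_comp_eq_zero ((eH : H →ₗ[R] R) ∘ₗ u ∘ₗ ι)
  have hker : ∀ a, (ι ∘ₗ g) a ∈ ker u := fun a => by
    simpa using congr($hgu a)
  exact ⟨(ι ∘ₗ g).codRestrict _ hker, (injective_codRestrict_iff _).2 (hι.comp hg)⟩

end Modules

theorem euler_system_annihilation_general
    {R : Type*} [CommRing R] [IsLocalRing R]
    (hprin : (IsLocalRing.maximalIdeal R).IsPrincipal)
    (k : ℕ) (hk : moduleLength R R = (k : ℕ∞))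
    {L : Type*} [DecidableEq L]
    (even : Finset L → Prop)
    (hflip : ∀ (n : Finset L) (ℓ : L), ℓ ∉ n → (even (insert ℓ n) ↔ ¬ even n))
    (Sel : Finset L → Type*) [∀ n, AddCommGroup (Sel n)] [∀ n, Module R (Sel n)]
    (M : Finset L → Type*) [∀ n, AddCommGroup (M n)] [∀ n, Module R (M n)]
    (isoEven : ∀ n, even n → Nonempty (Sel n ≃ₗ[R] M n × M n))
    (isoOdd : ∀ n, ¬ even n → Nonempty (Sel n ≃ₗ[R] R × M n × M n))
    (Hunr Hord : L → Type*)
    [∀ ℓ, AddCommGroup (Hunr ℓ)] [∀ ℓ, Module R (Hunr ℓ)]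
    [∀ ℓ, AddCommGroup (Hord ℓ)] [∀ ℓ, Module R (Hord ℓ)]
    (bUnr : ∀ ℓ, Nonempty (Module.Basis (Fin 1) R (Hunr ℓ)))
    (bOrd : ∀ ℓ, Nonempty (Module.Basis (Fin 1) R (Hord ℓ)))
    (locUnr : ∀ (n : Finset L) (ℓ : L), ℓ ∉ n → (Sel n →ₗ[R] Hunr ℓ))
    (locOrd : ∀ (n : Finset L) (ℓ : L), ℓ ∉ n → (Sel (insert ℓ n) →ₗ[R] Hord ℓ))
    -- (DU)
    (hDU : ∀ (n : Finset L) (ℓ : L) (h : ℓ ∉ n),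
      moduleLength R (LinearMap.range (locUnr n ℓ h)) +
        moduleLength R (LinearMap.range (locOrd n ℓ h)) = (k : ℕ∞))
    -- (LS)
    (hLS : ∀ (n : Finset L) (C : Submodule R (Sel n)), C ≠ ⊥ →
      (∃ x : Sel n, C = Submodule.span R {x}) →
      ∃ (ℓ : L) (h : ℓ ∉ n), ∀ x ∈ C, locUnr n ℓ h x = 0 → x = 0)
    -- (KER)
    (hKER : ∀ (n : Finset L) (ℓ : L) (h : ℓ ∉ n),
      ∃ g : LinearMap.ker (locUnr n ℓ h) →ₗ[R] Sel (insert ℓ n), Function.Injective g)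
    -- a bipartite Euler system of odd type
    (κ : ∀ n : Finset L, ¬ even n → Sel n)
    (lam : ∀ n : Finset L, even n → R)
    (hrec1 : ∀ (n : Finset L) (hn : even n) (ℓ : L) (h : ℓ ∉ n)
        (ho : ¬ even (insert ℓ n)),
      Nonempty ((R ⧸ Ideal.span {lam n hn}) ≃ₗ[R]
        (Hord ℓ ⧸ Submodule.span R {locOrd n ℓ h (κ (insert ℓ n) ho)})))
    (hrec2 : ∀ (n : Finset L) (hn : ¬ even n) (ℓ : L) (h : ℓ ∉ n)
        (he : even (insert ℓ n)),
      Nonempty ((R ⧸ Ideal.span {lam (insert ℓ n) he}) ≃ₗ[R]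
        (Hunr ℓ ⧸ Submodule.span R {locUnr n ℓ h (κ n hn)}))) :
    (∀ (n : Finset L) (hn : even n), lam n hn ≠ 0 →
      (IsLocalRing.maximalIdeal R) ^ (k - 1) • (⊤ : Submodule R (M n)) = ⊥) ∧
    (∀ (n : Finset L) (hn : ¬ even n), κ n hn ≠ 0 →
      (IsLocalRing.maximalIdeal R) ^ (k - 1) • (⊤ : Submodule R (M n)) = ⊥) := by
  obtain ⟨π, hπ : maximalIdeal R = Ideal.span {π}⟩ := hprin
  simp only [moduleLength_eq_length] at hk hDU
  have hπk := pow_eq_zero_of_length_eq hπ hk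
  have := preValuationRing_of_maximalIdeal_eq_span hπ hπk
  have eUnr ℓ : Hunr ℓ ≃ₗ[R] R := (bUnr ℓ).some.equivFun ≪≫ₗ LinearEquiv.funUnique (Fin 1) R R
  have eOrd ℓ : Hord ℓ ≃ₗ[R] R := (bOrd ℓ).some.equivFun ≪≫ₗ LinearEquiv.funUnique (Fin 1) R R
  have lam_eq_zero p (hp : even p) (f : R →ₗ[R] Sel p) (hf : Function.Injective f) :
      lam p hp = 0 := by
    obtain ⟨ℓ, h, hu⟩ := hLS p (R ∙ f 1)
      (Submodule.span_singleton_eq_bot.not.2 ((map_ne_zero_iff f hf).2 one_ne_zero)) ⟨_, rfl⟩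
    obtain ⟨e⟩ := hrec1 p hp ℓ h fun he => (hflip p ℓ h).1 he hp
    have hord := LinearMap.eq_zero_of_length_range_add_eq hk (hDU p ℓ h)
      (LinearMap.injective_comp_of_injOn_span hf hu)
    exact (eq_zero_iff_of_quotient_equiv (eOrd ℓ) e).2 (by rw [hord, LinearMap.zero_apply])
  refine ⟨fun n hn hlam => ?_, fun n hn hκ => ?_⟩
  · by_contra hM
    obtain ⟨f, hf⟩ := exists_injective_of_maximalIdeal_pow_smul_ne_bot hπ hπk hM
    obtain ⟨eS⟩ := isoEven n hn
    exact hlam (lam_eq_zero n hn (eS.symm.toLinearMap ∘ₗ LinearMap.inl R _ _ ∘ₗ f)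
      (eS.symm.injective.comp (LinearMap.inl_injective.comp hf)))
  · by_contra hM
    obtain ⟨f, hf⟩ := exists_injective_of_maximalIdeal_pow_smul_ne_bot hπ hπk hM
    obtain ⟨eS⟩ := isoOdd n hn
    obtain ⟨ℓ, h, hu⟩ := hLS n (R ∙ κ n hn) (by simpa using hκ) ⟨_, rfl⟩
    obtain ⟨g, hg⟩ := LinearMap.exists_injective_ker_of_injective_prod (eUnr ℓ) (locUnr n ℓ h)
      (ι := eS.symm.toLinearMap ∘ₗ LinearMap.id.prodMap (LinearMap.inl R _ _ ∘ₗ f))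
      (eS.symm.injective.comp (Function.injective_id.prodMap (LinearMap.inl_injective.comp hf)))
    obtain ⟨j, hj⟩ := hKER n ℓ h
    have he := (hflip n ℓ h).2 hn
    obtain ⟨e⟩ := hrec2 n hn ℓ h he
    exact hκ (hu _ (Submodule.mem_span_singleton_self _)
      ((eq_zero_iff_of_quotient_equiv (eUnr ℓ) e).1 (lam_eq_zero _ he (j ∘ₗ g) (hj.comp hg))))

/-- Given bipartite Euler system data over `R` satisfying (DU), (LS) and (KER), for a
bipartite Euler system of odd type: if `λ_n ≠ 0` (`n ∈ N^even`) then `𝔪^{k-1} M_n = 0`,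
and if `κ_n ≠ 0` (`n ∈ N^odd`) then `𝔪^{k-1} M_n = 0`. -/
theorem euler_system_annihilation
    {R : Type*} [CommRing R] [IsLocalRing R] [IsArtinianRing R]
    (hprin : (IsLocalRing.maximalIdeal R).IsPrincipal)
    (k : ℕ) (hk : moduleLength R R = (k : ℕ∞))
    {L : Type*} [Infinite L] [DecidableEq L]
    (even : Finset L → Prop)
    (hflip : ∀ (n : Finset L) (ℓ : L), ℓ ∉ n → (even (insert ℓ n) ↔ ¬ even n))
    (Sel : Finset L → Type*) [∀ n, AddCommGroup (Sel n)] [∀ n, Module R (Sel n)]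
    (M : Finset L → Type*) [∀ n, AddCommGroup (M n)] [∀ n, Module R (M n)]
    (m : Finset L → ℕ) (hm : ∀ n, moduleLength R (M n) = (m n : ℕ∞))
    (isoEven : ∀ n, even n → Nonempty (Sel n ≃ₗ[R] M n × M n))
    (isoOdd : ∀ n, ¬ even n → Nonempty (Sel n ≃ₗ[R] R × M n × M n))
    (Hunr Hord : L → Type*)
    [∀ ℓ, AddCommGroup (Hunr ℓ)] [∀ ℓ, Module R (Hunr ℓ)]
    [∀ ℓ, AddCommGroup (Hord ℓ)] [∀ ℓ, Module R (Hord ℓ)]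
    (bUnr : ∀ ℓ, Nonempty (Module.Basis (Fin 1) R (Hunr ℓ)))
    (bOrd : ∀ ℓ, Nonempty (Module.Basis (Fin 1) R (Hord ℓ)))
    (locUnr : ∀ (n : Finset L) (ℓ : L), ℓ ∉ n → (Sel n →ₗ[R] Hunr ℓ))
    (locOrd : ∀ (n : Finset L) (ℓ : L), ℓ ∉ n → (Sel (insert ℓ n) →ₗ[R] Hord ℓ))
    -- (DU)
    (hDU : ∀ (n : Finset L) (ℓ : L) (h : ℓ ∉ n),
      moduleLength R (LinearMap.range (locUnr n ℓ h)) +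
        moduleLength R (LinearMap.range (locOrd n ℓ h)) = (k : ℕ∞))
    -- (LS)
    (hLS : ∀ (n : Finset L) (C : Submodule R (Sel n)), C ≠ ⊥ →
      (∃ x : Sel n, C = Submodule.span R {x}) →
      ∃ (ℓ : L) (h : ℓ ∉ n), ∀ x ∈ C, locUnr n ℓ h x = 0 → x = 0)
    -- (KER)
    (hKER : ∀ (n : Finset L) (ℓ : L) (h : ℓ ∉ n),
      ∃ g : LinearMap.ker (locUnr n ℓ h) →ₗ[R] Sel (insert ℓ n), Function.Injective g)
    -- a bipartite Euler system of odd type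
    (κ : ∀ n : Finset L, ¬ even n → Sel n)
    (lam : ∀ n : Finset L, even n → R)
    (hrec1 : ∀ (n : Finset L) (hn : even n) (ℓ : L) (h : ℓ ∉ n)
        (ho : ¬ even (insert ℓ n)),
      Nonempty ((R ⧸ Ideal.span {lam n hn}) ≃ₗ[R]
        (Hord ℓ ⧸ Submodule.span R {locOrd n ℓ h (κ (insert ℓ n) ho)})))
    (hrec2 : ∀ (n : Finset L) (hn : ¬ even n) (ℓ : L) (h : ℓ ∉ n)
        (he : even (insert ℓ n)),
      Nonempty ((R ⧸ Ideal.span {lam (insert ℓ n) he}) ≃ₗ[R]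
        (Hunr ℓ ⧸ Submodule.span R {locUnr n ℓ h (κ n hn)}))) :
    (∀ (n : Finset L) (hn : even n), lam n hn ≠ 0 →
      (IsLocalRing.maximalIdeal R) ^ (k - 1) • (⊤ : Submodule R (M n)) = ⊥) ∧
    (∀ (n : Finset L) (hn : ¬ even n), κ n hn ≠ 0 →
      (IsLocalRing.maximalIdeal R) ^ (k - 1) • (⊤ : Submodule R (M n)) = ⊥) :=
  euler_system_annihilation_general hprin k hk even hflip Sel M isoEven isoOdd Hunr Hord bUnr bOrd
    locUnr locOrd hDU hLS hKER κ lam hrec1 hrec2
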